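/- arXiv:1612.06343 — 3 statements merged into one kernel-verified Lean document; each statement's English description precedes it below -/
import Mathlib

section
/- Let n ≥ 1 and let μ be a Borel probability measure supported on the unit sphere S^{n−1} ⊂ ℝⁿ. Then for every positive integer k, ∫∫ ⟨x,y⟩^{2k} dμ(x)dμ(y) ≥ (1·3·5⋯(2k−1)) / (n·(n+2)⋯(n+2k−2)) = ∏_{j=1}^{k} (2j−1)/(n+2j−2). -/
/-!
Pair the moment tensor `T_μ = (∫ x_{f 1} ⋯ x_{f p} dμ)_f`, `p = 2k`, with that of the standard
Gaussian `γ`: `∫∫ ⟪x, y⟫ ^ p dμ dν = ⟨T_μ, T_ν⟩`, so the energy is `‖T_μ‖²` and Cauchy–Schwarz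
gives `⟨T_μ, T_γ⟩² ≤ ‖T_μ‖² ‖T_γ‖²`. Since `⟪x, g⟫` is centred Gaussian with variance `‖x‖²`,
`∫ ⟪x, g⟫ ^ 2k dγ(g) = (2k-1)‼ ‖x‖ ^ 2k`; hence `⟨T_μ, T_γ⟩ = (2k-1)‼` for `μ` on the sphere and
`‖T_γ‖² = (2k-1)‼ ∫ ‖g‖ ^ 2k dγ = (2k-1)‼ n (n+2) ⋯ (n+2k-2)`. The last moment is computed by
induction on `n`, splitting off one coordinate; the binomial expansion then reduces the step to the
Chu–Vandermonde identity for the products `∏_{i<j} (a + 2i) = (-2)^j (-a/2)(-a/2-1)⋯`.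
-/

open MeasureTheory ProbabilityTheory Finset Real Polynomial
open scoped RealInnerProductSpace Nat

lemma prod_range_two_mul_add_one_eq_doubleFactorial (k : ℕ) :
    ∏ j ∈ range k, (2 * (j : ℝ) + 1) = ((2 * k - 1 : ℕ)‼ : ℝ) := by
  cases k with
  | zero => simp
  | succ k =>
    rw [show 2 * (k + 1) - 1 = 2 * k + 1 by omega, Nat.doubleFactorial_eq_prod_odd,
      prod_range_succ', Nat.cast_prod]
    simp

lemma integral_pow_two_mul_gaussianReal (k : ℕ) :
    ∫ t, t ^ (2 * k) ∂gaussianReal 0 1 = ∏ j ∈ range k, (2 * (j : ℝ) + 1) := by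
  have hpdf (x : ℝ) : gaussianPDFReal 0 1 x * x ^ (2 * k) =
      (√(2 * π))⁻¹ * (|x| ^ ((2 * k : ℕ) : ℝ) * rexp (-(1 / 2) * |x| ^ (2 : ℝ))) := by
    rw [gaussianPDFReal, rpow_natCast, rpow_two, sq_abs, (even_two_mul k).pow_abs]
    simp only [NNReal.coe_one, mul_one, sub_zero]
    ring_nf
  have hexp : (((2 * k : ℕ) : ℝ) + 1) / 2 = k + 1 / 2 := by push_cast; ring
  have hhalf : (1 / 2 : ℝ) ^ (-(((2 * k : ℕ) : ℝ) + 1) / 2) = 2 ^ k * √2 := by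
    rw [one_div, inv_rpow zero_le_two, ← rpow_neg zero_le_two, neg_div, neg_neg, hexp,
      rpow_add two_pos, rpow_natCast, sqrt_eq_rpow, one_div]
  rw [integral_gaussianReal_eq_integral_smul one_ne_zero]
  simp_rw [smul_eq_mul, hpdf]
  rw [integral_comp_abs
      (f := fun x ↦ (√(2 * π))⁻¹ * (x ^ ((2 * k : ℕ) : ℝ) * rexp (-(1 / 2) * x ^ (2 : ℝ)))),
    integral_const_mul, integral_rpow_mul_exp_neg_mul_rpow two_pos
      (neg_one_lt_zero.trans_le (by positivity)) one_half_pos, hhalf, hexp,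
    Gamma_nat_add_half, prod_range_two_mul_add_one_eq_doubleFactorial, sqrt_mul zero_le_two]
  field_simp

section InnerProductSpace

variable {E : Type*} [NormedAddCommGroup E] [InnerProductSpace ℝ E] [FiniteDimensional ℝ E]
  [MeasurableSpace E] [BorelSpace E]

lemma map_inner_stdGaussian (x : E) :
    (stdGaussian E).map (fun g ↦ ⟪x, g⟫) = (gaussianReal 0 1).map (fun t ↦ ‖x‖ * t) := by
  have h := IsGaussian.map_eq_gaussianReal (μ := stdGaussian E) (innerSL ℝ x)
  rw [integral_strongDual_stdGaussian, variance_dual_stdGaussian, innerSL_apply_norm] at h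
  rw [gaussianReal_map_const_mul, mul_zero, mul_one]
  convert h using 2
  · ext; simp
  · ext; simp

lemma integral_inner_pow_stdGaussian (x : E) (p : ℕ) :
    ∫ g, ⟪x, g⟫ ^ p ∂stdGaussian E = ‖x‖ ^ p * ∫ t, t ^ p ∂gaussianReal 0 1 := by
  have h := congrArg (fun ν ↦ ∫ t, t ^ p ∂ν) (map_inner_stdGaussian x)
  rw [integral_map (by fun_prop) (by fun_prop), integral_map (by fun_prop) (by fun_prop)] at h
  simp_rw [h, mul_pow, integral_const_mul]

end InnerProductSpace

lemma ProbabilityTheory.IsGaussian.integrable_norm_pow {F : Type*} [NormedAddCommGroup F]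
    [NormedSpace ℝ F] [MeasurableSpace F] [BorelSpace F] [CompleteSpace F]
    [SecondCountableTopology F]
    (μ : Measure F) [IsGaussian μ] (p : ℕ) : Integrable (fun x ↦ ‖x‖ ^ p) μ := by
  simpa using (IsGaussian.memLp_id μ p (by simp)).integrable_norm_pow'

lemma prod_add_two_mul_eq_descPochhammer (a : ℝ) (j : ℕ) :
    ∏ i ∈ range j, (a + 2 * i) = (-2) ^ j * (descPochhammer ℤ j).smeval (-a / 2) := by
  rw [← aeval_eq_smeval, aeval_def, eval₂_eq_eval_map, descPochhammer_map,
    descPochhammer_eval_eq_prod_range, pow_eq_prod_const, ← prod_mul_distrib]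
  exact prod_congr rfl fun i _ ↦ by ring

lemma sum_antidiagonal_choose_mul_prod_add_two_mul (a b : ℝ) (k : ℕ) :
    ∑ m ∈ antidiagonal k, (k.choose m.1 : ℝ) * (∏ i ∈ range m.1, (a + 2 * i)) *
      ∏ i ∈ range m.2, (b + 2 * i) = ∏ i ∈ range k, (a + b + 2 * i) := by
  simp_rw [prod_add_two_mul_eq_descPochhammer, show -(a + b) / 2 = -a / 2 + -b / 2 by ring,
    Ring.descPochhammer_smeval_add _ (Commute.all (-a / 2) (-b / 2)), mul_sum]
  refine sum_congr rfl fun m hm ↦ ?_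
  rw [← mem_antidiagonal.1 hm, pow_add]
  ring

lemma integral_add_pow_prod {α β : Type*} [MeasurableSpace α] [MeasurableSpace β]
    {μ : Measure α} {ν : Measure β} [SFinite μ] [SFinite ν] {f : α → ℝ} {g : β → ℝ} {k : ℕ}
    (hf : ∀ j ≤ k, Integrable (fun x ↦ f x ^ j) μ) (hg : ∀ j ≤ k, Integrable (fun y ↦ g y ^ j) ν) :
    ∫ z, (f z.1 + g z.2) ^ k ∂μ.prod ν =
      ∑ m ∈ antidiagonal k, (k.choose m.1 : ℝ) * (∫ x, f x ^ m.1 ∂μ) * ∫ y, g y ^ m.2 ∂ν := by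
  simp_rw [fun z : α × β ↦ (Commute.all (f z.1) (g z.2)).add_pow' k, nsmul_eq_mul]
  rw [integral_finsetSum]
  · refine sum_congr rfl fun m _ ↦ ?_
    rw [integral_const_mul, integral_prod_mul (fun x ↦ f x ^ m.1) (fun y ↦ g y ^ m.2), mul_assoc]
  · intro m hm
    have hk := mem_antidiagonal.1 hm
    exact ((hf _ (by omega)).mul_prod (hg _ (by omega))).const_mul _

lemma integrable_sum_sq_pow_pi_gaussianReal {ι : Type*} [Fintype ι] (k : ℕ) :
    Integrable (fun g : ι → ℝ ↦ (∑ i, g i ^ 2) ^ k) (Measure.pi fun _ ↦ gaussianReal 0 1) := by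
  have h := IsGaussian.integrable_norm_pow (stdGaussian (EuclideanSpace ℝ ι)) (2 * k)
  rw [← map_pi_eq_stdGaussian, integrable_map_measure (by fun_prop) (by fun_prop)] at h
  simpa [Function.comp_def, pow_mul, EuclideanSpace.norm_sq_eq] using h

lemma integral_sum_sq_pow_pi_gaussianReal (n k : ℕ) :
    ∫ g, (∑ i, g i ^ 2) ^ k ∂Measure.pi (fun _ : Fin n ↦ gaussianReal 0 1) =
      ∏ j ∈ range k, ((n : ℝ) + 2 * j) := by
  induction n generalizing k with
  | zero => cases k <;> simp [prod_range_succ']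
  | succ n ih =>
    have hsplit := (measurePreserving_piFinSuccAbove
      (fun _ : Fin (n + 1) ↦ gaussianReal 0 1) 0).integral_comp'
        (fun z ↦ (z.1 ^ 2 + ∑ i, z.2 i ^ 2) ^ k)
    simp only [MeasurableEquiv.piFinSuccAbove_apply, Fin.insertNthEquiv_zero,
      Fin.consEquiv_symm_apply, Fin.tail, ← Fin.sum_univ_succ (f := fun i ↦ _ ^ 2)] at hsplit
    have hsq (j : ℕ) : (fun t : ℝ ↦ (t ^ 2) ^ j) = fun t ↦ t ^ (2 * j) := by
      ext t; rw [← pow_mul, mul_comm]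
    have hint (j : ℕ) : Integrable (fun t : ℝ ↦ (t ^ 2) ^ j) (gaussianReal 0 1) := by
      simpa only [pow_mul, Real.norm_eq_abs, sq_abs] using
        IsGaussian.integrable_norm_pow (gaussianReal 0 1) (2 * j)
    have hexp := integral_add_pow_prod (μ := gaussianReal 0 1)
      (ν := Measure.pi fun _ : Fin n ↦ gaussianReal 0 1) (f := fun t ↦ t ^ 2)
      (g := fun h ↦ ∑ i, h i ^ 2) (k := k) (fun j _ ↦ hint j)
      (fun j _ ↦ integrable_sum_sq_pow_pi_gaussianReal j)
    refine hsplit.trans (hexp.trans ?_)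
    simp_rw [hsq, integral_pow_two_mul_gaussianReal, ih]
    rw [Nat.cast_succ, add_comm (n : ℝ), ← sum_antidiagonal_choose_mul_prod_add_two_mul]
    exact sum_congr rfl fun m _ ↦ by simp_rw [add_comm (2 * _ : ℝ) 1]

lemma integral_norm_pow_two_mul_stdGaussian (n k : ℕ) :
    ∫ g, ‖g‖ ^ (2 * k) ∂stdGaussian (EuclideanSpace ℝ (Fin n)) =
      ∏ j ∈ range k, ((n : ℝ) + 2 * j) := by
  rw [← map_pi_eq_stdGaussian, integral_map (by fun_prop) (by fun_prop)]
  simpa [pow_mul, EuclideanSpace.norm_sq_eq] using integral_sum_sq_pow_pi_gaussianReal n k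

section MomentTensor

variable {ι : Type*} [Fintype ι] {μ ν : Measure (EuclideanSpace ℝ ι)} {p : ℕ}

noncomputable def momentTensor (μ : Measure (EuclideanSpace ℝ ι)) (p : ℕ) (f : Fin p → ι) : ℝ :=
  ∫ x, ∏ j, x (f j) ∂μ

lemma inner_pow_eq_sum_prod (x y : EuclideanSpace ℝ ι) (p : ℕ) :
    ⟪x, y⟫ ^ p = ∑ f : Fin p → ι, (∏ j, x (f j)) * ∏ j, y (f j) := by
  have hinner : ⟪x, y⟫ = ∑ i, x i * y i := by simp [PiLp.inner_apply, mul_comm]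
  simp_rw [hinner, Fintype.sum_pow, prod_mul_distrib]

lemma integrable_prod_apply (hμ : Integrable (fun x ↦ ‖x‖ ^ p) μ) (f : Fin p → ι) :
    Integrable (fun x : EuclideanSpace ℝ ι ↦ ∏ j, x (f j)) μ := by
  refine hμ.mono' (by fun_prop) (Filter.Eventually.of_forall fun x ↦ ?_)
  calc ‖∏ j, x (f j)‖ = ∏ j, ‖x (f j)‖ := norm_prod _ _
    _ ≤ ∏ _j : Fin p, ‖x‖ :=
      prod_le_prod (fun _ _ ↦ norm_nonneg _) fun j _ ↦ PiLp.norm_apply_le x (f j)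
    _ = ‖x‖ ^ p := by simp

lemma integral_inner_pow_eq_sum (hν : Integrable (fun y ↦ ‖y‖ ^ p) ν) (x : EuclideanSpace ℝ ι) :
    ∫ y, ⟪x, y⟫ ^ p ∂ν = ∑ f : Fin p → ι, (∏ j, x (f j)) * momentTensor ν p f := by
  simp_rw [inner_pow_eq_sum_prod, momentTensor, ← integral_const_mul]
  exact integral_finsetSum _ fun f _ ↦ (integrable_prod_apply hν f).const_mul _

lemma integral_integral_inner_pow_eq_sum (hμ : Integrable (fun x ↦ ‖x‖ ^ p) μ)
    (hν : Integrable (fun y ↦ ‖y‖ ^ p) ν) :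
    ∫ x, ∫ y, ⟪x, y⟫ ^ p ∂ν ∂μ = ∑ f : Fin p → ι, momentTensor μ p f * momentTensor ν p f := by
  simp_rw [integral_inner_pow_eq_sum hν, momentTensor, ← integral_mul_const]
  exact integral_finsetSum _ fun f _ ↦ (integrable_prod_apply hμ f).mul_const _

lemma sq_integral_integral_inner_pow_le (hμ : Integrable (fun x ↦ ‖x‖ ^ p) μ)
    (hν : Integrable (fun y ↦ ‖y‖ ^ p) ν) :
    (∫ x, ∫ y, ⟪x, y⟫ ^ p ∂ν ∂μ) ^ 2 ≤
      (∫ x, ∫ y, ⟪x, y⟫ ^ p ∂μ ∂μ) * ∫ x, ∫ y, ⟪x, y⟫ ^ p ∂ν ∂ν := by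
  simp_rw [integral_integral_inner_pow_eq_sum hμ hν, integral_integral_inner_pow_eq_sum hμ hμ,
    integral_integral_inner_pow_eq_sum hν hν, ← sq]
  exact sum_mul_sq_le_sq_mul_sq _ _ _

end MomentTensor

lemma ae_norm_eq_one_of_measure_sphere_eq_one {F : Type*} [NormedAddCommGroup F]
    [MeasurableSpace F] [OpensMeasurableSpace F] {μ : Measure F} [IsProbabilityMeasure μ]
    (hμ : μ (Metric.sphere 0 1) = 1) : ∀ᵐ x ∂μ, ‖x‖ = 1 := by
  have h := (ae_mem_iff_measure_eq Metric.isClosed_sphere.nullMeasurableSet).2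
    (hμ.trans measure_univ.symm)
  simpa using h

theorem sphere_energy_lower_bound_general (n : ℕ)
    (μ : Measure (EuclideanSpace ℝ (Fin n))) [IsProbabilityMeasure μ]
    (hμ : μ (Metric.sphere (0 : EuclideanSpace ℝ (Fin n)) 1) = 1)
    (k : ℕ) :
    (∫ x, ∫ y, ⟪x, y⟫ ^ (2 * k) ∂μ ∂μ)
      ≥ ∏ j ∈ Finset.range k, (2 * (j : ℝ) + 1) / ((n : ℝ) + 2 * j) := by
  set c := ∏ j ∈ range k, (2 * (j : ℝ) + 1)
  set A := ∏ j ∈ range k, ((n : ℝ) + 2 * j)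
  have hsphere := ae_norm_eq_one_of_measure_sphere_eq_one hμ
  have hμint : Integrable (fun x ↦ ‖x‖ ^ (2 * k)) μ :=
    (integrable_const 1).congr (hsphere.mono fun x hx ↦ by simp [hx])
  have hcross : ∫ x, ∫ g, ⟪x, g⟫ ^ (2 * k) ∂stdGaussian _ ∂μ = c := by
    simp_rw [integral_inner_pow_stdGaussian, integral_pow_two_mul_gaussianReal]
    rw [integral_congr_ae (g := fun _ ↦ c) (hsphere.mono fun x hx ↦ by simp [hx, c])]
    simp
  have hgauss : ∫ g, ∫ h, ⟪g, h⟫ ^ (2 * k) ∂stdGaussian (EuclideanSpace ℝ (Fin n))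
      ∂stdGaussian _ = A * c := by
    simp_rw [integral_inner_pow_stdGaussian, integral_pow_two_mul_gaussianReal,
      integral_mul_const, integral_norm_pow_two_mul_stdGaussian]
    rfl
  have hCS := sq_integral_integral_inner_pow_le hμint
    (IsGaussian.integrable_norm_pow (stdGaussian _) (2 * k))
  rw [hcross, hgauss] at hCS
  have hc : 0 < c := prod_pos fun j _ ↦ by positivity
  have hE : 0 ≤ ∫ x, ∫ y, ⟪x, y⟫ ^ (2 * k) ∂μ ∂μ :=
    integral_nonneg fun x ↦ integral_nonneg fun y ↦ (even_two_mul k).pow_nonneg _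
  rw [prod_div_distrib, ge_iff_le]
  refine div_le_of_le_mul₀ (prod_nonneg fun j _ ↦ by positivity) hE ?_
  nlinarith

/-- Energy lower bound on the sphere: the `2k`-th inner-product energy of any Borel
probability measure on `S^{n-1}` is at least `∏_{j=1}^k (2j-1)/(n+2j-2)`. -/
theorem sphere_energy_lower_bound (n : ℕ) (hn : 1 ≤ n)
    (μ : Measure (EuclideanSpace ℝ (Fin n))) [IsProbabilityMeasure μ]
    (hμ : μ (Metric.sphere (0 : EuclideanSpace ℝ (Fin n)) 1) = 1)
    (k : ℕ) (hk : 0 < k) :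
    (∫ x, ∫ y, ⟪x, y⟫ ^ (2 * k) ∂μ ∂μ)
      ≥ ∏ j ∈ Finset.range k, (2 * (j : ℝ) + 1) / ((n : ℝ) + 2 * j) :=
  sphere_energy_lower_bound_general n μ hμ k
end

section
/- Let z₁, …, z_m be unit vectors in ℂⁿ. Then for every positive integer k, (1/m²) ∑_{i=1}^{m} ∑_{j=1}^{m} |⟨z_i, z_j⟩|^{2k} ≥ C(n+k−1, k)⁻¹, where C(n+k−1, k) is the binomial coefficient. -/
/-!
Weighting the degree-`k` monomials of `z ∈ ℂⁿ` by the square roots of the multinomial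
coefficients gives a vector `veronese k z` in a space of dimension `d = C(n+k-1, k)` with
`⟪veronese k z, veronese k w⟫ = ⟪z, w⟫ ^ k`. So it suffices to show that any vectors `u i` in a
`d`-dimensional space satisfy `(∑ ‖u i‖²)² ≤ d ∑ |⟪u i, u j⟫|²`. This is Cauchy–Schwarz on the
diagonal of the frame operator `∑ u i u iᴴ`, whose trace is `∑ ‖u i‖²` and whose squared
Frobenius norm equals that of the Gram matrix.
-/

open scoped ComplexInnerProductSpace ComplexConjugate
open Finset

section FramePotential

variable {𝕜 ι σ : Type*} [RCLike 𝕜] [Fintype ι] [Fintype σ]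

theorem sum_norm_inner_sq_eq_sum_norm_frame_sq (u : ι → EuclideanSpace 𝕜 σ) :
    ∑ i, ∑ j, ‖inner 𝕜 (u i) (u j)‖ ^ 2 = ∑ s, ∑ t, ‖∑ i, conj (u i s) * u i t‖ ^ 2 := by
  apply RCLike.ofReal_injective (K := 𝕜)
  push_cast
  simp only [← RCLike.conj_mul, PiLp.inner_apply, RCLike.inner_apply, map_sum, map_mul,
    RCLike.conj_conj, sum_mul_sum]
  simp only [← Fintype.sum_prod_type' (α₁ := σ) (α₂ := σ),
    ← Fintype.sum_prod_type' (α₁ := ι) (α₂ := ι)]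
  rw [sum_comm]
  exact sum_congr rfl fun _ _ => sum_congr rfl fun _ _ => by ring

theorem sq_sum_norm_sq_le_card_mul_sum_norm_inner_sq (u : ι → EuclideanSpace 𝕜 σ) :
    (∑ i, ‖u i‖ ^ 2) ^ 2 ≤ Fintype.card σ * ∑ i, ∑ j, ‖inner 𝕜 (u i) (u j)‖ ^ 2 := by
  have norm_diag (s : σ) : ‖∑ i, conj (u i s) * u i s‖ = ∑ i, ‖u i s‖ ^ 2 := by
    simp only [RCLike.conj_mul, ← RCLike.ofReal_pow, ← RCLike.ofReal_sum, RCLike.norm_ofReal]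
    exact abs_of_nonneg (by positivity)
  calc (∑ i, ‖u i‖ ^ 2) ^ 2 = (∑ s, ∑ i, ‖u i s‖ ^ 2) ^ 2 := by
        simp only [EuclideanSpace.norm_sq_eq]
        rw [sum_comm]
    _ ≤ Fintype.card σ * ∑ s, (∑ i, ‖u i s‖ ^ 2) ^ 2 := sq_sum_le_card_mul_sum_sq
    _ ≤ Fintype.card σ * ∑ s, ∑ t, ‖∑ i, conj (u i s) * u i t‖ ^ 2 := by
        gcongr with s
        rw [← norm_diag]
        exact single_le_sum (f := fun t => ‖∑ i, conj (u i s) * u i t‖ ^ 2)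
          (fun _ _ => by positivity) (mem_univ s)
    _ = _ := by rw [sum_norm_inner_sq_eq_sum_norm_frame_sq]

theorem sq_sum_norm_sq_le_finrank_mul_sum_norm_inner_sq {E : Type*} [NormedAddCommGroup E]
    [InnerProductSpace 𝕜 E] [FiniteDimensional 𝕜 E] (u : ι → E) :
    (∑ i, ‖u i‖ ^ 2) ^ 2 ≤ Module.finrank 𝕜 E * ∑ i, ∑ j, ‖inner 𝕜 (u i) (u j)‖ ^ 2 := by
  simpa only [LinearIsometryEquiv.norm_map, LinearIsometryEquiv.inner_map_map, Fintype.card_fin]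
    using sq_sum_norm_sq_le_card_mul_sum_norm_inner_sq
      fun i => (stdOrthonormalBasis 𝕜 E).repr (u i)

end FramePotential

namespace Sym

def ofFn {α : Type*} {k : ℕ} (g : Fin k → α) : Sym α k := ⟨univ.val.map g, by simp⟩

theorem prod_map_ofFn {α M : Type*} [CommMonoid M] {k : ℕ} (f : α → M) (g : Fin k → α) :
    ((ofFn g : Multiset α).map f).prod = ∏ t, f (g t) := by
  simp [ofFn, prod_eq_multiset_prod, Function.comp_def]

end Sym

section Veronese

variable {𝕜 σ : Type*} [RCLike 𝕜] [Fintype σ] [DecidableEq σ]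

noncomputable def veronese (k : ℕ) (z : EuclideanSpace 𝕜 σ) : EuclideanSpace 𝕜 (Sym σ k) :=
  WithLp.toLp 2 fun s =>
    (√(#{g : Fin k → σ | Sym.ofFn g = s} : ℝ) : 𝕜) * ((s : Multiset σ).map z).prod

theorem inner_veronese (k : ℕ) (z w : EuclideanSpace 𝕜 σ) :
    inner 𝕜 (veronese k z) (veronese k w) = inner 𝕜 z w ^ k := by
  have sqrt_mul_self (s : Sym σ k) :
      (√(#{g : Fin k → σ | Sym.ofFn g = s} : ℝ) : 𝕜) * √(#{g : Fin k → σ | Sym.ofFn g = s} : ℝ)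
        = #{g : Fin k → σ | Sym.ofFn g = s} := by
    rw [← RCLike.ofReal_mul, Real.mul_self_sqrt (Nat.cast_nonneg _), RCLike.ofReal_natCast]
  calc inner 𝕜 (veronese k z) (veronese k w)
      = ∑ s : Sym σ k, #{g : Fin k → σ | Sym.ofFn g = s} •
          (((s : Multiset σ).map w).prod * conj ((s : Multiset σ).map z).prod) := by
        simp only [veronese, PiLp.inner_apply, RCLike.inner_apply, map_mul, RCLike.conj_ofReal,
          nsmul_eq_mul]
        refine sum_congr rfl fun s _ => ?_
        rw [← sqrt_mul_self]
        ring
    _ = ∑ g : Fin k → σ, ((Sym.ofFn g : Multiset σ).map w).prod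
          * conj ((Sym.ofFn g : Multiset σ).map z).prod := by
        rw [← sum_fiberwise' univ Sym.ofFn fun s : Sym σ k =>
          ((s : Multiset σ).map w).prod * conj ((s : Multiset σ).map z).prod]
        exact sum_congr rfl fun s _ => (sum_const _).symm
    _ = ∑ g : Fin k → σ, ∏ t, w (g t) * conj (z (g t)) := by
        simp only [Sym.prod_map_ofFn, map_prod, prod_mul_distrib]
    _ = inner 𝕜 z w ^ k := by
        simp only [PiLp.inner_apply, RCLike.inner_apply, Fintype.sum_pow]

theorem norm_veronese (k : ℕ) (z : EuclideanSpace 𝕜 σ) : ‖veronese k z‖ = ‖z‖ ^ k := by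
  have h := inner_veronese k z z
  rw [inner_self_eq_norm_sq_to_K, inner_self_eq_norm_sq_to_K, ← pow_mul, ← RCLike.ofReal_pow,
    ← RCLike.ofReal_pow, RCLike.ofReal_inj, mul_comm, pow_mul] at h
  exact (pow_left_inj₀ (norm_nonneg _) (by positivity) two_ne_zero).mp h

end Veronese

theorem welch_average_bound_general (n m : ℕ) (hm : 0 < m)
    (z : Fin m → EuclideanSpace ℂ (Fin n)) (hz : ∀ i, ‖z i‖ = 1)
    (k : ℕ) :
    (1 / (m : ℝ) ^ 2) * ∑ i : Fin m, ∑ j : Fin m, ‖⟪z i, z j⟫‖ ^ (2 * k)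
      ≥ ((Nat.choose (n + k - 1) k : ℝ))⁻¹ := by
  have frame := sq_sum_norm_sq_le_finrank_mul_sum_norm_inner_sq (𝕜 := ℂ)
    fun i => veronese k (z i)
  simp only [norm_veronese, hz, one_pow, sum_const, card_univ, Fintype.card_fin, nsmul_eq_mul,
    mul_one, inner_veronese, norm_pow, ← pow_mul, mul_comm k 2, finrank_euclideanSpace,
    Sym.card_sym_eq_choose] at frame
  have hd : (0 : ℝ) < (n + k - 1).choose k :=
    pos_of_mul_pos_left ((by positivity : (0 : ℝ) < m ^ 2).trans_le frame) (by positivity)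
  rw [ge_iff_le, one_div_mul_eq_div, le_div_iff₀ (by positivity), inv_mul_le_iff₀ hd]
  exact frame

/-- Welch's average cross-correlation bound for unit vectors in `ℂⁿ`. -/
theorem welch_average_bound (n m : ℕ) (hm : 0 < m)
    (z : Fin m → EuclideanSpace ℂ (Fin n)) (hz : ∀ i, ‖z i‖ = 1)
    (k : ℕ) (hk : 0 < k) :
    (1 / (m : ℝ) ^ 2) * ∑ i : Fin m, ∑ j : Fin m, ‖⟪z i, z j⟫‖ ^ (2 * k)
      ≥ ((Nat.choose (n + k - 1) k : ℝ))⁻¹ :=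
  welch_average_bound_general n m hm z hz k
end

section
/- Let μ be a Borel probability measure on ℂⁿ with finite moments of all orders (∫‖z‖ᵏ dμ < ∞ for all k), and let ν be a unitary symmetrization of μ, i.e. a Borel probability measure on ℂⁿ invariant under every unitary transformation whose pushforward under z ↦ ‖z‖ equals that of μ. Then for every positive integer k, ∫∫ |⟨z,w⟩|^{2k} dμ(z)dμ(w) ≥ ∫∫ |⟨z,w⟩|^{2k} dν(z)dν(w). -/
/-!
The kernel `|⟪z, w⟫|^(2k)` has the explicit feature map `Φ z = (z^⊗k)(z^⊗k)^*` into a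
finite-dimensional Hilbert space, so the interaction energy of `μ` and `ν` is
`re ⟪∫ Φ dμ, ∫ Φ dν⟫`. Since `ν` is unitarily invariant and unitaries act transitively on spheres,
the potential `z ↦ ∫ |⟪z, w⟫|^(2k) dν(w)` depends only on `‖z‖`; as `μ` and `ν` have the same
radial distribution, the mixed energy of `μ, ν` equals the energy of `ν`. Hence
`0 ≤ ‖∫ Φ dμ - ∫ Φ dν‖² = E(μ) - E(ν)`.
-/

open MeasureTheory
open scoped ComplexInnerProductSpace

open scoped InnerProductSpace ComplexConjugate
open RCLike

namespace EuclideanSpace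

variable {𝕜 ι : Type*} [RCLike 𝕜]

noncomputable def tensorPow (k : ℕ) (z : EuclideanSpace 𝕜 ι) : EuclideanSpace 𝕜 (Fin k → ι) :=
  WithLp.toLp 2 fun I => ∏ t, z (I t)

noncomputable def selfOuter (v : EuclideanSpace 𝕜 ι) : EuclideanSpace 𝕜 (ι × ι) :=
  WithLp.toLp 2 fun p => v p.1 * conj (v p.2)

theorem continuous_tensorPow (k : ℕ) : Continuous (tensorPow (𝕜 := 𝕜) (ι := ι) k) := by
  unfold tensorPow
  fun_prop

theorem continuous_selfOuter : Continuous (selfOuter (𝕜 := 𝕜) (ι := ι)) := by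
  refine (PiLp.continuous_toLp 2 _).comp (continuous_pi fun p => ?_)
  exact (PiLp.continuous_apply 2 _ p.1).mul (continuous_conj.comp (PiLp.continuous_apply 2 _ p.2))

variable [Fintype ι]

theorem inner_tensorPow (k : ℕ) (z w : EuclideanSpace 𝕜 ι) :
    ⟪tensorPow k z, tensorPow k w⟫_𝕜 = ⟪z, w⟫_𝕜 ^ k := by
  simp only [tensorPow, PiLp.inner_apply, inner_apply, map_prod, ← Finset.prod_mul_distrib,
    Fintype.sum_pow]

theorem inner_selfOuter (v w : EuclideanSpace 𝕜 ι) :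
    ⟪selfOuter v, selfOuter w⟫_𝕜 = ((‖⟪v, w⟫_𝕜‖ ^ 2 : ℝ) : 𝕜) := by
  rw [ofReal_pow, ← mul_conj]
  simp only [selfOuter, PiLp.inner_apply, inner_apply, Fintype.sum_prod_type, map_sum, map_mul,
    conj_conj, Finset.sum_mul_sum]
  refine Finset.sum_congr rfl fun a _ => Finset.sum_congr rfl fun b _ => ?_
  ring

theorem re_inner_selfOuter_tensorPow (k : ℕ) (z w : EuclideanSpace 𝕜 ι) :
    re ⟪selfOuter (tensorPow k z), selfOuter (tensorPow k w)⟫_𝕜 = ‖⟪z, w⟫_𝕜‖ ^ (2 * k) := by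
  rw [inner_selfOuter, inner_tensorPow, ofReal_re, norm_pow, ← pow_mul, mul_comm]

theorem norm_selfOuter_tensorPow (k : ℕ) (z : EuclideanSpace 𝕜 ι) :
    ‖selfOuter (tensorPow k z)‖ = ‖z‖ ^ (2 * k) := by
  have h := re_inner_selfOuter_tensorPow k z z
  rw [inner_self_eq_norm_sq, inner_self_eq_norm_sq_to_K, norm_pow, norm_ofReal, abs_norm,
    ← pow_mul, mul_comm, pow_mul] at h
  exact (pow_left_inj₀ (norm_nonneg _) (by positivity) two_ne_zero).1 h

theorem integrable_selfOuter_tensorPow [MeasurableSpace (EuclideanSpace 𝕜 ι)]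
    [BorelSpace (EuclideanSpace 𝕜 ι)] {ρ : Measure (EuclideanSpace 𝕜 ι)} (k : ℕ)
    (h : Integrable (fun z => ‖z‖ ^ (2 * k)) ρ) :
    Integrable (fun z => selfOuter (tensorPow k z)) ρ :=
  h.mono' (continuous_selfOuter.comp (continuous_tensorPow k)).aestronglyMeasurable
    (ae_of_all _ fun z => (norm_selfOuter_tensorPow k z).le)

end EuclideanSpace

section InteractionEnergy

variable {𝕜 X H : Type*} [RCLike 𝕜] [NormedAddCommGroup H] [InnerProductSpace 𝕜 H]
  [NormedSpace ℝ H] [CompleteSpace H] [MeasurableSpace X] {μ ν : Measure X} {Φ : X → H}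

noncomputable def interactionEnergy (K : X → X → ℝ) (μ ν : Measure X) : ℝ :=
  ∫ z, ∫ w, K z w ∂ν ∂μ

theorem integral_re_inner_right (hΦ : Integrable Φ ν) (x : H) :
    ∫ w, re ⟪x, Φ w⟫_𝕜 ∂ν = re ⟪x, ∫ w, Φ w ∂ν⟫_𝕜 := by
  rw [integral_re (hΦ.const_inner x), integral_inner hΦ]

theorem interactionEnergy_eq_re_inner_integral {K : X → X → ℝ}
    (hK : ∀ z w, K z w = re ⟪Φ z, Φ w⟫_𝕜) (hμ : Integrable Φ μ) (hν : Integrable Φ ν) :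
    interactionEnergy K μ ν = re ⟪∫ z, Φ z ∂μ, ∫ w, Φ w ∂ν⟫_𝕜 := by
  simp only [interactionEnergy, hK, integral_re_inner_right hν]
  simp only [inner_re_symm (𝕜 := 𝕜) _ (∫ w, Φ w ∂ν), integral_re_inner_right hμ]

theorem interactionEnergy_le_of_interactionEnergy_eq {K : X → X → ℝ}
    (hK : ∀ z w, K z w = re ⟪Φ z, Φ w⟫_𝕜) (hμ : Integrable Φ μ) (hν : Integrable Φ ν)
    (h : interactionEnergy K μ ν = interactionEnergy K ν ν) :
    interactionEnergy K ν ν ≤ interactionEnergy K μ μ := by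
  rw [interactionEnergy_eq_re_inner_integral hK hμ hν,
    interactionEnergy_eq_re_inner_integral hK hν hν, inner_self_eq_norm_sq] at h
  rw [interactionEnergy_eq_re_inner_integral hK hμ hμ,
    interactionEnergy_eq_re_inner_integral hK hν hν, inner_self_eq_norm_sq, inner_self_eq_norm_sq]
  nlinarith [norm_sub_sq (𝕜 := 𝕜) (∫ z, Φ z ∂μ) (∫ w, Φ w ∂ν)]

end InteractionEnergy

section RadialDistribution

variable {E G : Type*} [NormedAddCommGroup E] [MeasurableSpace E] [BorelSpace E]
  [NormedAddCommGroup G] {μ ν : Measure E}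

theorem integrable_comp_norm_of_map_norm_eq (h : μ.map (‖·‖) = ν.map (‖·‖)) {g : ℝ → G}
    (hg : AEStronglyMeasurable g (μ.map (‖·‖))) (hμ : Integrable (fun z => g ‖z‖) μ) :
    Integrable (fun z => g ‖z‖) ν := by
  have hmap := (integrable_map_measure hg measurable_norm.aemeasurable).2 hμ
  rw [h] at hmap
  exact (integrable_map_measure (h ▸ hg) measurable_norm.aemeasurable).1 hmap

theorem integral_comp_norm_of_map_norm_eq [NormedSpace ℝ G] (h : μ.map (‖·‖) = ν.map (‖·‖))
    {g : ℝ → G} (hg : AEStronglyMeasurable g (μ.map (‖·‖))) :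
    ∫ z, g ‖z‖ ∂μ = ∫ z, g ‖z‖ ∂ν := by
  rw [← integral_map measurable_norm.aemeasurable hg, h,
    integral_map measurable_norm.aemeasurable (h ▸ hg)]

end RadialDistribution

section UnitaryInvariance

variable {𝕜 E : Type*} [RCLike 𝕜] [NormedAddCommGroup E] [InnerProductSpace 𝕜 E]

theorem exists_linearIsometryEquiv_apply_eq_of_norm_eq [FiniteDimensional 𝕜 E] {x y : E}
    (h : ‖x‖ = ‖y‖) : ∃ U : E ≃ₗᵢ[𝕜] E, U x = y := by
  rcases eq_or_ne x 0 with rfl | hx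
  · exact ⟨LinearIsometryEquiv.refl 𝕜 E, (norm_eq_zero.1 (h.symm.trans norm_zero)).symm⟩
  have hy : y ≠ 0 := norm_ne_zero_iff.1 (h ▸ norm_ne_zero_iff.2 hx)
  have hd : 0 < Module.finrank 𝕜 E := Module.finrank_pos_iff_exists_ne_zero.2 ⟨x, hx⟩
  let i₀ : Fin (Module.finrank 𝕜 E) := ⟨0, hd⟩
  have normalize (u : E) (hu : u ≠ 0) :
      ∃ b : OrthonormalBasis (Fin (Module.finrank 𝕜 E)) 𝕜 E, u = (‖u‖ : 𝕜) • b i₀ := by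
    obtain ⟨b, hb⟩ := Orthonormal.exists_orthonormalBasis_extension_of_card_eq (𝕜 := 𝕜)
      (v := fun _ => (‖u‖⁻¹ : 𝕜) • u) (s := {i₀}) (Fintype.card_fin _).symm
      (orthonormal_subsingleton_iff.2 fun _ => norm_smul_inv_norm hu)
    refine ⟨b, ?_⟩
    rw [hb i₀ rfl, smul_smul, mul_inv_cancel₀ (by simpa using hu), one_smul]
  obtain ⟨b₁, hb₁⟩ := normalize x hx
  obtain ⟨b₂, hb₂⟩ := normalize y hy
  refine ⟨b₁.repr.trans b₂.repr.symm, ?_⟩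
  rw [hb₁, hb₂, map_smul, LinearIsometryEquiv.trans_apply, OrthonormalBasis.repr_self,
    OrthonormalBasis.repr_symm_single, h]

variable [MeasurableSpace E] [BorelSpace E]

theorem exists_measurable_eq_comp_norm [FiniteDimensional 𝕜 E] {β : Type*} [MeasurableSpace β]
    {F : E → β} (hF : Measurable F) (hinv : ∀ (U : E ≃ₗᵢ[𝕜] E) z, F (U z) = F z) :
    ∃ g : ℝ → β, Measurable g ∧ ∀ z, F z = g ‖z‖ := by
  rcases subsingleton_or_nontrivial E with hE | hE
  · exact ⟨fun _ => F 0, measurable_const, fun z => congrArg F (Subsingleton.elim z 0)⟩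
  obtain ⟨x, hx⟩ := exists_ne (0 : E)
  set e : E := (‖x‖⁻¹ : 𝕜) • x
  refine ⟨fun r => F ((r : 𝕜) • e),
    hF.comp ((continuous_ofReal.smul continuous_const).measurable), fun z => ?_⟩
  obtain ⟨U, hU⟩ := exists_linearIsometryEquiv_apply_eq_of_norm_eq (𝕜 := 𝕜)
    (x := ((‖z‖ : ℝ) : 𝕜) • e) (y := z) (by rw [norm_smul, norm_smul_inv_norm hx]; simp)
  exact (congrArg F hU).symm.trans (hinv U _)

theorem integral_eq_of_map_norm_eq [FiniteDimensional 𝕜 E] {μ ν : Measure E}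
    (h : μ.map (‖·‖) = ν.map (‖·‖)) {F : E → ℝ} (hF : Measurable F)
    (hinv : ∀ (U : E ≃ₗᵢ[𝕜] E) z, F (U z) = F z) :
    ∫ z, F z ∂μ = ∫ z, F z ∂ν := by
  obtain ⟨g, hg, hFg⟩ := exists_measurable_eq_comp_norm hF hinv
  simp only [hFg]
  exact integral_comp_norm_of_map_norm_eq h hg.aestronglyMeasurable

theorem integral_comp_inner_linearIsometryEquiv {G : Type*} [NormedAddCommGroup G]
    [NormedSpace ℝ G] {ν : Measure E} (U : E ≃ₗᵢ[𝕜] E) (hU : ν.map U = ν) (f : 𝕜 → G) (z : E) :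
    ∫ w, f ⟪U z, w⟫_𝕜 ∂ν = ∫ w, f ⟪z, w⟫_𝕜 ∂ν := by
  have hU' : MeasurePreserving U.toHomeomorph.toMeasurableEquiv ν ν :=
    ⟨U.continuous.measurable, hU⟩
  simp_rw [U.inner_map_eq_flip]
  exact hU'.symm.integral_comp' (fun w => f ⟪z, w⟫_𝕜)

end UnitaryInvariance

theorem complex_energy_ge_unitary_symmetrization_general (n : ℕ)
    [MeasurableSpace (EuclideanSpace ℂ (Fin n))] [BorelSpace (EuclideanSpace ℂ (Fin n))]
    (μ ν : Measure (EuclideanSpace ℂ (Fin n)))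
    [IsProbabilityMeasure ν]
    (hmom : ∀ k : ℕ, Integrable (fun z => ‖z‖ ^ k) μ)
    (huni : ∀ U : EuclideanSpace ℂ (Fin n) ≃ₗᵢ[ℂ] EuclideanSpace ℂ (Fin n),
      Measure.map U ν = ν)
    (hrad : Measure.map (fun z => ‖z‖) μ = Measure.map (fun z => ‖z‖) ν)
    (k : ℕ) :
    (∫ z, ∫ w, ‖⟪z, w⟫‖ ^ (2 * k) ∂μ ∂μ)
      ≥ ∫ z, ∫ w, ‖⟪z, w⟫‖ ^ (2 * k) ∂ν ∂ν := by
  have hmomν : Integrable (fun z => ‖z‖ ^ (2 * k)) ν :=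
    integrable_comp_norm_of_map_norm_eq hrad (continuous_pow _).aestronglyMeasurable (hmom _)
  have hpotential : Measurable fun z => ∫ w, ‖⟪z, w⟫‖ ^ (2 * k) ∂ν :=
    (StronglyMeasurable.integral_prod_right' (by fun_prop : Continuous fun
      p : EuclideanSpace ℂ (Fin n) × _ => ‖⟪p.1, p.2⟫‖ ^ (2 * k)).stronglyMeasurable).measurable
  refine interactionEnergy_le_of_interactionEnergy_eq
    (fun z w => (EuclideanSpace.re_inner_selfOuter_tensorPow k z w).symm)
    (EuclideanSpace.integrable_selfOuter_tensorPow k (hmom _))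
    (EuclideanSpace.integrable_selfOuter_tensorPow k hmomν) ?_
  exact integral_eq_of_map_norm_eq hrad hpotential
    fun U z => integral_comp_inner_linearIsometryEquiv U (huni U) (fun c => ‖c‖ ^ (2 * k)) z

/-- Complex version: the unitary symmetrization minimizes the `2k`-th modulus
inner-product energy among measures with the given radial distribution. -/
theorem complex_energy_ge_unitary_symmetrization (n : ℕ)
    [MeasurableSpace (EuclideanSpace ℂ (Fin n))] [BorelSpace (EuclideanSpace ℂ (Fin n))]
    (μ ν : Measure (EuclideanSpace ℂ (Fin n)))
    [IsProbabilityMeasure μ] [IsProbabilityMeasure ν]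
    (hmom : ∀ k : ℕ, Integrable (fun z => ‖z‖ ^ k) μ)
    (huni : ∀ U : EuclideanSpace ℂ (Fin n) ≃ₗᵢ[ℂ] EuclideanSpace ℂ (Fin n),
      Measure.map U ν = ν)
    (hrad : Measure.map (fun z => ‖z‖) μ = Measure.map (fun z => ‖z‖) ν)
    (k : ℕ) (hk : 0 < k) :
    (∫ z, ∫ w, ‖⟪z, w⟫‖ ^ (2 * k) ∂μ ∂μ)
      ≥ ∫ z, ∫ w, ‖⟪z, w⟫‖ ^ (2 * k) ∂ν ∂ν :=
  complex_energy_ge_unitary_symmetrization_general n μ ν hmom huni hrad k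
end
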